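/- Let Cᵢ be a symmetric positive definite real 3×3 matrix with det Cᵢ = 1 and let c₁₀, c₀₁ ∈ ℝ. Define the Mooney–Rivlin free energy W on the set of symmetric positive definite real 3×3 matrices by W(C) := (c₁₀/2)·(tr((det C)^{-1/3}·C·Cᵢ⁻¹) − 3) + (c₀₁/2)·(tr((det C)^{1/3}·Cᵢ·C⁻¹) − 3). Then W is differentiable at every symmetric positive definite C (as a function on 3×3 matrices near C), and for every symmetric real 3×3 matrix H the directional derivative satisfies DW(C)[H] = (1/2)·tr(T̃·H), where T̃ := C⁻¹·(c₁₀·C̄·Cᵢ⁻¹ − c₀₁·Cᵢ·C̄⁻¹)^D and C̄ := (det C)^{-1/3}·C. That is, the hyperelastic relation T̃ = 2·∂W/∂C yields the stated Mooney–Rivlin second Piola–Kirchhoff stress. -/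

import Mathlib

open Matrix

abbrev Mat := Matrix (Fin 3) (Fin 3) ℝ

attribute [local instance] Matrix.frobeniusNormedAddCommGroup Matrix.frobeniusNormedSpace

/-- The unimodular part of a matrix. -/
noncomputable def unimod (M : Mat) : Mat := (M.det ^ (-(1 : ℝ) / 3)) • M

/-- The deviatoric part of a matrix. -/
noncomputable def dev (M : Mat) : Mat := M - (M.trace / 3) • (1 : Mat)

/-! Differentiating the Leibniz expansion of the determinant term by term gives Jacobi's formula
`D det(C)[H] = tr(adj C · H)`, hence `D(det^p)(C)[H] = p (det C)^p tr(C⁻¹ H)`; together with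
`D(M⁻¹)(C)[H] = -C⁻¹ H C⁻¹` and the product rule, the two isochoric invariants `tr(C̄ Cᵢ⁻¹)` and
`tr(Cᵢ C̄⁻¹)` have gradients `C⁻¹ (C̄ Cᵢ⁻¹)^D` and `-C⁻¹ (Cᵢ C̄⁻¹)^D` for the pairing
`(X, H) ↦ tr(X H)`: differentiating the volumetric factor `(det C)^(∓1/3)` produces exactly the
trace part that the deviator removes. -/

attribute [local instance] Matrix.frobeniusNormedRing Matrix.frobeniusNormedAlgebra

section

variable {n R : Type*} [Fintype n] [DecidableEq n] [CommRing R]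

lemma det_updateCol_eq_sum (A : Matrix n n R) (i : n) (v : n → R) :
    (A.updateCol i v).det =
      ∑ σ : Equiv.Perm n, Equiv.Perm.sign σ • (v (σ i) * ∏ j ∈ Finset.univ.erase i, A (σ j) j) := by
  rw [det_apply]
  refine Finset.sum_congr rfl fun σ _ => ?_
  rw [← Finset.mul_prod_erase _ _ (Finset.mem_univ i), updateCol_self]
  congr 2
  refine Finset.prod_congr rfl fun j hj => ?_
  rw [updateCol_ne (Finset.ne_of_mem_erase hj)]

lemma trace_adjugate_mul (A H : Matrix n n R) :
    (A.adjugate * H).trace = ∑ i, (A.updateCol i (fun k => H k i)).det := by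
  simp only [trace, diag, ← cramer_apply, cramer_eq_adjugate_mulVec, mulVec, mul_apply, dotProduct]

lemma adjugate_eq_det_smul_inv {A : Matrix n n R} (hA : IsUnit A.det) :
    A.adjugate = A.det • A⁻¹ := by
  rw [inv_def, smul_smul, Ring.mul_inverse_cancel _ hA, one_smul]

end

section

variable {n : Type*} [Fintype n] [DecidableEq n]

/- The type is left to be inferred: written out as `Matrix n n ℝ →L[ℝ] ℝ` it would elaborate with
the product topology instead of the Frobenius one, and the two agree only up to unfolding, which
blocks rewriting inside the derivatives built from these maps. -/
noncomputable def toFrobeniusCLM (f : Matrix n n ℝ →ₗ[ℝ] ℝ) :=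
  IsBoundedLinearMap.toContinuousLinearMap f (LinearMap.toContinuousLinearMap f).isBoundedLinearMap

@[simp]
lemma toFrobeniusCLM_apply (f : Matrix n n ℝ →ₗ[ℝ] ℝ) (M : Matrix n n ℝ) :
    toFrobeniusCLM f M = f M := rfl

noncomputable def traceMulCLM (X : Matrix n n ℝ) :=
  toFrobeniusCLM (traceLinearMap n ℝ ℝ ∘ₗ LinearMap.mulLeft ℝ X)

@[simp]
lemma traceMulCLM_apply (X H : Matrix n n ℝ) : traceMulCLM X H = (X * H).trace := rfl

theorem hasFDerivAt_det (A : Matrix n n ℝ) :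
    HasFDerivAt det (traceMulCLM A.adjugate) A := by
  have hdet : (det : Matrix n n ℝ → ℝ) = fun M => ∑ σ : Equiv.Perm n,
      Equiv.Perm.sign σ • ∏ i, toFrobeniusCLM (entryLinearMap ℝ ℝ (σ i) i) M := by
    ext M; simp [det_apply]
  rw [hdet]
  refine (HasFDerivAt.fun_sum fun σ _ => (HasFDerivAt.finsetProd fun i _ =>
    (toFrobeniusCLM _).hasFDerivAt).const_smul (Equiv.Perm.sign σ)).congr_fderiv ?_
  ext H
  simp only [FunLike.coe_sum, FunLike.coe_smul, Finset.sum_apply, Pi.smul_apply, smul_eq_mul,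
    toFrobeniusCLM_apply, entryLinearMap_apply, traceMulCLM_apply, trace_adjugate_mul,
    det_updateCol_eq_sum, Finset.smul_sum]
  rw [Finset.sum_comm]
  simp only [mul_comm]

theorem hasFDerivAt_det_rpow {A : Matrix n n ℝ} (hA : 0 < A.det) (p : ℝ) :
    HasFDerivAt (fun M : Matrix n n ℝ => M.det ^ p) ((p * A.det ^ p) • traceMulCLM A⁻¹) A := by
  refine ((hasFDerivAt_det A).rpow_const (Or.inl hA.ne')).congr_fderiv ?_
  ext H
  simp only [FunLike.coe_smul, Pi.smul_apply, smul_eq_mul, traceMulCLM_apply,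
    adjugate_eq_det_smul_inv hA.ne'.isUnit, smul_mul, trace_smul, Real.rpow_sub_one hA.ne']
  field_simp

theorem hasFDerivAt_matrix_inv {A : Matrix n n ℝ} (hA : IsUnit A.det) :
    HasFDerivAt (fun M : Matrix n n ℝ => M⁻¹)
      (-ContinuousLinearMap.mulLeftRight ℝ (Matrix n n ℝ) A⁻¹ A⁻¹) A := by
  obtain ⟨u, rfl⟩ := (isUnit_iff_isUnit_det A).2 hA
  have hinv : (fun M : Matrix n n ℝ => M⁻¹) = Ring.inverse := funext nonsing_inv_eq_ringInverse
  simpa only [hinv, coe_units_inv] using hasFDerivAt_ringInverse (𝕜 := ℝ) u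

end

lemma dev_sub (M N : Mat) : dev (M - N) = dev M - dev N := by
  simp only [dev, trace_sub, sub_div, sub_smul]; abel

lemma dev_smul (c : ℝ) (M : Mat) : dev (c • M) = c • dev M := by
  simp only [dev, trace_smul, smul_eq_mul, mul_div_assoc, smul_sub, smul_smul]

lemma unimod_inv {C : Mat} (hC : 0 < C.det) : (unimod C)⁻¹ = C.det ^ ((1 : ℝ) / 3) • C⁻¹ := by
  refine inv_eq_left_inv ?_
  rw [unimod, smul_mul_smul_comm, nonsing_inv_mul _ hC.ne'.isUnit, ← Real.rpow_add hC]
  norm_num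

theorem hasFDerivAt_trace_unimod_mul (B : Mat) {C : Mat} (hC : 0 < C.det) :
    HasFDerivAt (fun M : Mat => ((M.det ^ (-(1 : ℝ) / 3)) • (M * B)).trace)
      (traceMulCLM (C⁻¹ * dev (unimod C * B))) C := by
  have htrace : HasFDerivAt (fun M : Mat => (M * B).trace) (traceMulCLM B) C :=
    (traceMulCLM B).hasFDerivAt.congr_of_eventuallyEq
      (Filter.Eventually.of_forall fun M => trace_mul_comm M B)
  simp only [trace_smul, smul_eq_mul]
  refine ((hasFDerivAt_det_rpow hC _).mul htrace).congr_fderiv ?_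
  ext H
  simp only [FunLike.coe_add, FunLike.coe_smul, Pi.add_apply, Pi.smul_apply, smul_eq_mul,
    traceMulCLM_apply, dev, unimod, smul_mul, Matrix.mul_sub, Matrix.sub_mul, Matrix.mul_smul,
    Matrix.mul_one, nonsing_inv_mul_cancel_left _ _ hC.ne'.isUnit, trace_sub, trace_smul,
    trace_mul_comm B H]
  ring

theorem hasFDerivAt_trace_mul_unimod_inv (B : Mat) {C : Mat} (hC : 0 < C.det) :
    HasFDerivAt (fun M : Mat => ((M.det ^ ((1 : ℝ) / 3)) • (B * M⁻¹)).trace)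
      (-traceMulCLM (C⁻¹ * dev (B * (unimod C)⁻¹))) C := by
  have htrace : HasFDerivAt (fun M : Mat => (B * M⁻¹).trace)
      ((traceMulCLM B).comp (-ContinuousLinearMap.mulLeftRight ℝ Mat C⁻¹ C⁻¹)) C :=
    (traceMulCLM B).hasFDerivAt.comp C (hasFDerivAt_matrix_inv hC.ne'.isUnit)
  simp only [trace_smul, smul_eq_mul]
  refine ((hasFDerivAt_det_rpow hC _).mul htrace).congr_fderiv ?_
  ext H
  simp only [FunLike.coe_add, FunLike.coe_smul, Pi.add_apply, Pi.smul_apply, smul_eq_mul,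
    ContinuousLinearMap.comp_apply, _root_.neg_apply, ContinuousLinearMap.mulLeftRight_apply,
    traceMulCLM_apply, dev, unimod_inv hC, Matrix.mul_smul, Matrix.mul_sub, Matrix.sub_mul,
    Matrix.mul_neg, Matrix.smul_mul, Matrix.mul_one, trace_sub, trace_smul, trace_neg,
    ← Matrix.mul_assoc]
  rw [trace_mul_comm (B * C⁻¹ * H) C⁻¹]
  simp only [← Matrix.mul_assoc]
  ring

theorem mooney_rivlin_hyperelastic_stress (Ci : Mat) (c10 c01 : ℝ) (C : Mat) (hC : C.PosDef) :
    ∃ W' : Mat →L[ℝ] ℝ,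
      HasFDerivAt (fun M : Mat =>
          c10 / 2 * (((M.det ^ (-(1 : ℝ) / 3)) • (M * Ci⁻¹)).trace - 3) +
          c01 / 2 * (((M.det ^ ((1 : ℝ) / 3)) • (Ci * M⁻¹)).trace - 3)) W' C ∧
        ∀ H : Mat, Hᵀ = H →
          W' H = 1 / 2 *
            ((C⁻¹ * dev (c10 • (unimod C * Ci⁻¹) - c01 • (Ci * (unimod C)⁻¹)) * H).trace) := by
  have hW :=
    ((((hasFDerivAt_trace_unimod_mul Ci⁻¹ hC.det_pos).sub_const 3).const_mul (c10 / 2)).add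
      (((hasFDerivAt_trace_mul_unimod_inv Ci hC.det_pos).sub_const 3).const_mul (c01 / 2)))
  refine ⟨traceMulCLM ((1 / 2 : ℝ) •
      (C⁻¹ * dev (c10 • (unimod C * Ci⁻¹) - c01 • (Ci * (unimod C)⁻¹)))), hW.congr_fderiv ?_,
    fun H _ => (traceMulCLM_apply _ _).trans (by rw [smul_mul, trace_smul, smul_eq_mul])⟩
  ext H
  simp only [FunLike.coe_add, FunLike.coe_smul, FunLike.coe_neg, Pi.add_apply, Pi.smul_apply,
    Pi.neg_apply, smul_eq_mul, traceMulCLM_apply, dev_sub, dev_smul, Matrix.mul_sub,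
    Matrix.sub_mul, Matrix.mul_smul, Matrix.smul_mul, trace_sub, trace_smul]
  ring
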